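/- Let f : ℝ → ℝ be positive, continuous, and log-convex on [0,∞), k a positive natural number, and μ = f^k. Let (Ω, 𝜈) be a finite measure space with 𝜈(Ω) > 0 and ℓ : Ω → [0,∞) measurable. Define H ≥ 0 by ∫₀ᴴ μ = (1/𝜈(Ω)) ∫_Ω (∫₀^{ℓ(q)} μ(t) dt) d𝜈(q). Then 𝜈(Ω)·μ(H) ≤ ∫_Ω μ(ℓ(q)) d𝜈(q). -/

import Mathlib

open Set MeasureTheory intervalIntegral

lemma expInt (s c a b : ℝ) (hs : s ≠ 0) :
    ∫ t in a..b, Real.exp (s * (t - c)) =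
      (Real.exp (s * (b - c)) - Real.exp (s * (a - c))) / s := by
  have hd : ∀ t : ℝ, HasDerivAt (fun t => Real.exp (s * (t - c)) / s)
      (Real.exp (s * (t - c))) t := by
    intro t
    have h1 : HasDerivAt (fun t : ℝ => s * (t - c)) s t := by
      simpa using ((hasDerivAt_id t).sub_const c).const_mul s
    have h2 := (Real.hasDerivAt_exp (s * (t - c))).comp t h1
    have h3 := h2.div_const s
    simpa [mul_div_assoc, mul_div_cancel_right₀ _ hs] using h3
  rw [intervalIntegral.integral_eq_sub_of_hasDerivAt (fun t _ => hd t)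
      ((Real.continuous_exp.comp (by continuity)).intervalIntegrable a b)]
  ring

lemma keyPt (μ : ℝ → ℝ) (hμc : ContinuousOn μ (Ici 0))
    (hμp : ∀ t ∈ Ici (0:ℝ), 0 < μ t) (s H : ℝ) (hH : 0 ≤ H)
    (hA : ∀ t ∈ Ici (0:ℝ), μ H * Real.exp (s * (t - H)) ≤ μ t)
    (hB : ∀ x ∈ Ici (0:ℝ), ∀ t ∈ uIcc H x, μ t ≤ μ x * Real.exp (s * (t - x)))
    (x : ℝ) (hx : 0 ≤ x) :
    μ H + s * ((∫ t in (0:ℝ)..x, μ t) - ∫ t in (0:ℝ)..H, μ t) ≤ μ x := by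
  have hInt : ∀ a b : ℝ, 0 ≤ a → 0 ≤ b → IntervalIntegrable μ volume a b := by
    intro a b ha hb
    refine (hμc.mono ?_).intervalIntegrable
    intro t ht
    exact le_trans (le_min ha hb) ht.1
  have hsub : (∫ t in (0:ℝ)..x, μ t) - (∫ t in (0:ℝ)..H, μ t) = ∫ t in H..x, μ t :=
    intervalIntegral.integral_interval_sub_left (hInt 0 x le_rfl hx) (hInt 0 H le_rfl hH)
  rw [hsub]
  have hμx := hA x hx
  have hExpInt : ∀ a b c : ℝ, IntervalIntegrable (fun t => Real.exp (s * (t - c))) volume a b :=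
    fun a b c => (Real.continuous_exp.comp (by continuity)).intervalIntegrable a b
  have hexpinv : Real.exp (s * (x - H)) * Real.exp (s * (H - x)) = 1 := by
    rw [← Real.exp_add]; ring_nf; exact Real.exp_zero
  rcases le_total H x with hHx | hxH
  · -- H ≤ x
    rcases lt_trichotomy s 0 with hs | hs | hs
    · -- s < 0 : lower bound the integral, multiply by nonpos s
      have mono : ∫ t in H..x, μ H * Real.exp (s * (t - H)) ≤ ∫ t in H..x, μ t := by
        apply intervalIntegral.integral_mono_on hHx ((hExpInt H x H).const_mul _)
          (hInt H x hH hx)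
        intro t ht
        exact hA t (le_trans hH ht.1)
      have hcomp : ∫ t in H..x, μ H * Real.exp (s * (t - H))
          = μ H * ((Real.exp (s * (x - H)) - 1) / s) := by
        rw [intervalIntegral.integral_const_mul, expInt s H H x (ne_of_lt hs)]
        simp
      have h1 : s * (∫ t in H..x, μ t) ≤ μ H * (Real.exp (s * (x - H)) - 1) := by
        have := mul_le_mul_of_nonpos_left mono (le_of_lt hs)
        rw [hcomp] at this
        calc s * ∫ t in H..x, μ t ≤ s * (μ H * ((Real.exp (s * (x - H)) - 1) / s)) := this
          _ = μ H * (Real.exp (s * (x - H)) - 1) := by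
              field_simp
              rw [mul_assoc]
              exact mul_div_cancel_left₀ _ (ne_of_lt hs)
      nlinarith [hμx]
    · subst hs; simpa using hμx
    · -- 0 < s : upper bound the integral via hB
      have mono : ∫ t in H..x, μ t ≤ ∫ t in H..x, μ x * Real.exp (s * (t - x)) := by
        apply intervalIntegral.integral_mono_on hHx (hInt H x hH hx)
          ((hExpInt H x x).const_mul _)
        intro t ht
        exact hB x hx t (by rw [uIcc_of_le hHx]; exact ht)
      have hcomp : ∫ t in H..x, μ x * Real.exp (s * (t - x))
          = μ x * ((1 - Real.exp (s * (H - x))) / s) := by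
        rw [intervalIntegral.integral_const_mul, expInt s x H x (ne_of_gt hs)]
        simp
      have h1 : s * (∫ t in H..x, μ t) ≤ μ x * (1 - Real.exp (s * (H - x))) := by
        have := mul_le_mul_of_nonneg_left mono (le_of_lt hs)
        rw [hcomp] at this
        calc s * ∫ t in H..x, μ t ≤ s * (μ x * ((1 - Real.exp (s * (H - x))) / s)) := this
          _ = μ x * (1 - Real.exp (s * (H - x))) := by field_simp
      have h2 : μ H ≤ μ x * Real.exp (s * (H - x)) := by
        have := mul_le_mul_of_nonneg_right hμx (le_of_lt (Real.exp_pos (s * (H - x))))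
        rw [mul_assoc, hexpinv, mul_one] at this
        exact this
      linarith
  · -- x ≤ H
    have hflip : (∫ t in H..x, μ t) = - ∫ t in x..H, μ t :=
      (intervalIntegral.integral_symm x H)
    rw [hflip]
    rcases lt_trichotomy s 0 with hs | hs | hs
    · -- s < 0 : upper bound ∫ via hB, multiply by s (flips)
      have mono : ∫ t in x..H, μ t ≤ ∫ t in x..H, μ x * Real.exp (s * (t - x)) := by
        apply intervalIntegral.integral_mono_on hxH (hInt x H hx hH)
          ((hExpInt x H x).const_mul _)
        intro t ht
        exact hB x hx t (by rw [uIcc_of_ge hxH]; exact ht)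
      have hcomp : ∫ t in x..H, μ x * Real.exp (s * (t - x))
          = μ x * ((Real.exp (s * (H - x)) - 1) / s) := by
        rw [intervalIntegral.integral_const_mul, expInt s x x H (ne_of_lt hs)]
        simp
      have h1 : μ x * (Real.exp (s * (H - x)) - 1) ≤ s * (∫ t in x..H, μ t) := by
        have := mul_le_mul_of_nonpos_left mono (le_of_lt hs)
        rw [hcomp] at this
        calc μ x * (Real.exp (s * (H - x)) - 1)
            = s * (μ x * ((Real.exp (s * (H - x)) - 1) / s)) := by
              field_simp
              rw [mul_comm (μ x) s, mul_assoc]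
              exact (mul_div_cancel_left₀ _ (ne_of_lt hs)).symm
          _ ≤ s * ∫ t in x..H, μ t := this
      have h2 : μ H ≤ μ x * Real.exp (s * (H - x)) := by
        have := mul_le_mul_of_nonneg_right hμx (le_of_lt (Real.exp_pos (s * (H - x))))
        rw [mul_assoc, hexpinv, mul_one] at this
        exact this
      linarith
    · subst hs; simpa using hμx
    · -- 0 < s : lower bound ∫ via hA
      have mono : ∫ t in x..H, μ H * Real.exp (s * (t - H)) ≤ ∫ t in x..H, μ t := by
        apply intervalIntegral.integral_mono_on hxH ((hExpInt x H H).const_mul _)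
          (hInt x H hx hH)
        intro t ht
        exact hA t (le_trans hx ht.1)
      have hcomp : ∫ t in x..H, μ H * Real.exp (s * (t - H))
          = μ H * ((1 - Real.exp (s * (x - H))) / s) := by
        rw [intervalIntegral.integral_const_mul, expInt s H x H (ne_of_gt hs)]
        simp
      have h1 : μ H * (1 - Real.exp (s * (x - H))) ≤ s * (∫ t in x..H, μ t) := by
        have := mul_le_mul_of_nonneg_left mono (le_of_lt hs)
        rw [hcomp] at this
        calc μ H * (1 - Real.exp (s * (x - H)))
            = s * (μ H * ((1 - Real.exp (s * (x - H))) / s)) := by field_simp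
          _ ≤ s * ∫ t in x..H, μ t := this
      nlinarith [hμx]

/-- measure-theoretic core of the relative isoperimetric inequality.
With `μ = f ^ k` (`f` positive, continuous, log-convex on `[0,∞)`), and `H` the
constant height trapping the same average volume as the height function `ℓ`,
the constant-height ceiling has smaller vertical area: `ν(Ω)·μ(H) ≤ ∫ μ(ℓ)`. -/
theorem stmt2 (f : ℝ → ℝ)
    (hpos : ∀ t ∈ Ici (0 : ℝ), 0 < f t)
    (hcont : ContinuousOn f (Ici 0))
    (hlc : ConvexOn ℝ (Ici 0) (fun t => Real.log (f t)))
    (k : ℕ) (hk : 1 ≤ k)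
    (μ : ℝ → ℝ) (hμ : ∀ t, μ t = f t ^ k)
    {Ω : Type*} [MeasurableSpace Ω] (ν : Measure Ω) [IsFiniteMeasure ν]
    (hν : 0 < ν univ)
    (ℓ : Ω → ℝ) (hℓmeas : Measurable ℓ) (hℓnonneg : ∀ q, 0 ≤ ℓ q)
    (hint1 : Integrable (fun q => μ (ℓ q)) ν)
    (hint2 : Integrable (fun q => ∫ t in (0:ℝ)..ℓ q, μ t) ν)
    (H : ℝ) (hH : 0 ≤ H)
    (hHdef : (∫ t in (0:ℝ)..H, μ t)
      = ((ν univ).toReal)⁻¹ * ∫ q, (∫ t in (0:ℝ)..ℓ q, μ t) ∂ν) :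
    (ν univ).toReal * μ H ≤ ∫ q, μ (ℓ q) ∂ν := by
  have hνtop : ν univ ≠ ⊤ := measure_ne_top ν univ
  have hνR : 0 < (ν univ).toReal := ENNReal.toReal_pos (ne_of_gt hν) hνtop
  have hμp : ∀ t ∈ Ici (0:ℝ), 0 < μ t := fun t ht => by
    rw [hμ]; exact pow_pos (hpos t ht) k
  have hμc : ContinuousOn μ (Ici 0) := by
    have : ContinuousOn (fun t => f t ^ k) (Ici 0) := hcont.pow k
    exact this.congr fun t _ => hμ t
  -- log μ is convex
  set h : ℝ → ℝ := fun t => Real.log (μ t) with hh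
  have hconv : ConvexOn ℝ (Ici 0) h := by
    have h1 : ConvexOn ℝ (Ici 0) (fun t => (k:ℝ) • Real.log (f t)) :=
      hlc.smul (Nat.cast_nonneg k)
    refine ⟨h1.1, fun x hx y hy a b ha hb hab => ?_⟩
    have e : ∀ t, h t = (k:ℝ) • Real.log (f t) := by
      intro t; simp only [hh, hμ, smul_eq_mul, Real.log_pow]
    rw [e, e, e]
    exact h1.2 hx hy ha hb hab
  rcases eq_or_lt_of_le hH with hH0 | hHpos
  · -- H = 0 : then ∫ V(ℓ) = 0 so ℓ = 0 a.e., equality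
    subst hH0
    have hVint0 : ∫ q, (∫ t in (0:ℝ)..ℓ q, μ t) ∂ν = 0 := by
      have h0 : (0:ℝ) = ((ν univ).toReal)⁻¹ * ∫ q, (∫ t in (0:ℝ)..ℓ q, μ t) ∂ν := by
        simpa using hHdef
      have hne : ((ν univ).toReal)⁻¹ ≠ 0 := inv_ne_zero (ne_of_gt hνR)
      exact (mul_eq_zero.mp h0.symm).resolve_left hne
    have hVnonneg : ∀ q, 0 ≤ ∫ t in (0:ℝ)..ℓ q, μ t := by
      intro q
      apply intervalIntegral.integral_nonneg (hℓnonneg q)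
      intro u hu
      exact le_of_lt (hμp u hu.1)
    have hae : (fun q => ∫ t in (0:ℝ)..ℓ q, μ t) =ᵐ[ν] 0 := by
      rw [← integral_eq_zero_iff_of_nonneg hVnonneg hint2]
      exact hVint0
    have haeℓ : ∀ᵐ q ∂ν, μ (ℓ q) = μ 0 := by
      filter_upwards [hae] with q hq
      have hℓ0 : ℓ q = 0 := by
        by_contra hne
        have hlt : 0 < ℓ q := lt_of_le_of_ne (hℓnonneg q) (Ne.symm hne)
        have hpos' : 0 < ∫ t in (0:ℝ)..ℓ q, μ t := by
          apply intervalIntegral.intervalIntegral_pos_of_pos_on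
          · refine (hμc.mono ?_).intervalIntegrable
            intro t ht
            exact le_trans (le_min le_rfl (hℓnonneg q)) ht.1
          · intro u hu; exact hμp u (le_of_lt hu.1)
          · exact hlt
        simp only [Pi.zero_apply] at hq
        exact absurd hq (ne_of_gt hpos')
      rw [hℓ0]
    have : ∫ q, μ (ℓ q) ∂ν = (ν univ).toReal * μ 0 := by
      rw [integral_congr_ae haeℓ, MeasureTheory.integral_const, smul_eq_mul]
      rfl
    rw [this]
  · -- H > 0 : supporting slope of h at H
    set g : ℝ → ℝ := fun t => (h t - h H) / (t - H) with hg
    have hmemIci : ∀ t : ℝ, 0 ≤ t → t ∈ Ici (0:ℝ) := fun t ht => ht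
    have hHmem : H ∈ Ici (0:ℝ) := hH
    have hgmono : ∀ u v : ℝ, 0 ≤ u → 0 ≤ v → u ≠ H → v ≠ H → u ≤ v → g u ≤ g v :=
      fun u v hu hv hune hvne huv => hconv.secant_mono hHmem hu hv hune hvne huv
    have hne0 : (0:ℝ) ∈ Ico (0:ℝ) H := ⟨le_rfl, hHpos⟩
    have hbdd : BddAbove (g '' Ico 0 H) := by
      refine ⟨g (H + 1), ?_⟩
      rintro y ⟨t, ht, rfl⟩
      exact hgmono t (H+1) ht.1 (by linarith) (ne_of_lt ht.2) (by linarith) (by linarith [ht.2])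
    set s : ℝ := sSup (g '' Ico 0 H) with hs
    have hlb : ∀ t ∈ Ico (0:ℝ) H, g t ≤ s := fun t ht => le_csSup hbdd ⟨t, ht, rfl⟩
    have hub : ∀ u, H < u → s ≤ g u := by
      intro u hu
      refine csSup_le (Set.Nonempty.image g ⟨0, hne0⟩) ?_
      rintro y ⟨t, ht, rfl⟩
      exact hgmono t u ht.1 (le_trans hH (le_of_lt hu)) (ne_of_lt ht.2) (ne_of_gt hu)
        (le_of_lt (lt_trans ht.2 hu))
    -- supporting line for h
    have hAh : ∀ t ∈ Ici (0:ℝ), h H + s * (t - H) ≤ h t := by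
      intro t ht
      rcases lt_trichotomy t H with htH | htH | htH
      · have := hlb t ⟨ht, htH⟩
        have hd : t - H < 0 := by linarith
        rw [hg] at this
        have := mul_le_mul_of_nonpos_right this (le_of_lt hd)
        rw [div_mul_cancel₀ _ (ne_of_lt hd)] at this
        linarith
      · subst htH; simp
      · have := hub t htH
        have hd : 0 < t - H := by linarith
        rw [hg] at this
        have := mul_le_mul_of_nonneg_right this (le_of_lt hd)
        rw [div_mul_cancel₀ _ (ne_of_gt hd)] at this
        linarith
    have hA : ∀ t ∈ Ici (0:ℝ), μ H * Real.exp (s * (t - H)) ≤ μ t := by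
      intro t ht
      have := hAh t ht
      have e1 : μ H * Real.exp (s * (t - H)) = Real.exp (h H + s * (t - H)) := by
        rw [Real.exp_add, Real.exp_log (hμp H hH)]
      rw [e1, ← Real.exp_log (hμp t ht)]
      exact Real.exp_le_exp.mpr this
    -- upper bound between H and x
    have hBh : ∀ x ∈ Ici (0:ℝ), ∀ t ∈ uIcc H x, h t ≤ h x + s * (t - x) := by
      intro x hx t ht
      rcases eq_or_ne t x with rfl | htx
      · simp
      rcases le_total H x with hHx | hxH
      · rw [uIcc_of_le hHx] at ht
        have htlt : t < x := lt_of_le_of_ne ht.2 htx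
        have hxH' : H < x := lt_of_le_of_lt ht.1 htlt
        have ht0 : 0 ≤ t := le_trans hH ht.1
        -- slope through x: (h H - h x)/(H - x) ≤ (h t - h x)/(t - x)
        have hsec : (h H - h x)/(H - x) ≤ (h t - h x)/(t - x) := by
          rcases eq_or_ne t H with rfl | htH
          · exact le_refl _
          · exact hconv.secant_mono hx hHmem ht0 (ne_of_lt hxH') htx ht.1
        have hgx : s ≤ g x := hub x hxH'
        have e : (h H - h x)/(H - x) = g x := by
          rw [hg, ← neg_div_neg_eq]; ring_nf
        rw [e] at hsec
        have : s ≤ (h t - h x)/(t - x) := le_trans hgx hsec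
        have hd : t - x < 0 := by linarith
        have := mul_le_mul_of_nonpos_right this (le_of_lt hd)
        rw [div_mul_cancel₀ _ (ne_of_lt hd)] at this
        linarith
      · rw [uIcc_of_ge hxH] at ht
        have hxt : x < t := lt_of_le_of_ne ht.1 (Ne.symm htx)
        have hxH' : x < H := lt_of_lt_of_le hxt ht.2
        have ht0 : 0 ≤ t := le_trans hx (le_of_lt hxt)
        have hHt0 : H ∈ Ici (0:ℝ) := hH
        have hsec : (h t - h x)/(t - x) ≤ (h H - h x)/(H - x) := by
          rcases eq_or_ne t H with rfl | htH
          · exact le_refl _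
          · exact hconv.secant_mono hx ht0 hHmem htx (ne_of_gt hxH') ht.2
        have hgx : g x ≤ s := hlb x ⟨hx, hxH'⟩
        have e : (h H - h x)/(H - x) = g x := by
          rw [hg, ← neg_div_neg_eq]; ring_nf
        rw [e] at hsec
        have : (h t - h x)/(t - x) ≤ s := le_trans hsec hgx
        have hd : 0 < t - x := by linarith
        have := mul_le_mul_of_nonneg_right this (le_of_lt hd)
        rw [div_mul_cancel₀ _ (ne_of_gt hd)] at this
        linarith
    have hB : ∀ x ∈ Ici (0:ℝ), ∀ t ∈ uIcc H x, μ t ≤ μ x * Real.exp (s * (t - x)) := by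
      intro x hx t ht
      have ht0 : (0:ℝ) ≤ t := le_trans (le_min hH hx) ht.1
      have := hBh x hx t ht
      have e1 : μ x * Real.exp (s * (t - x)) = Real.exp (h x + s * (t - x)) := by
        rw [Real.exp_add, Real.exp_log (hμp x hx)]
      rw [e1, ← Real.exp_log (hμp t ht0)]
      exact Real.exp_le_exp.mpr this
    -- pointwise inequality, then integrate
    set VH : ℝ := ∫ t in (0:ℝ)..H, μ t with hVH
    have hpt : ∀ q, μ H + s * ((∫ t in (0:ℝ)..ℓ q, μ t) - VH) ≤ μ (ℓ q) :=
      fun q => keyPt μ hμc hμp s H hH hA hB (ℓ q) (hℓnonneg q)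
    have hi2s : Integrable (fun q => (∫ t in (0:ℝ)..ℓ q, μ t) - VH) ν := by
      exact hint2.sub (integrable_const VH)
    have hi2' : Integrable (fun q => s * ((∫ t in (0:ℝ)..ℓ q, μ t) - VH)) ν := by
      exact hi2s.const_mul s
    have hint3 : Integrable (fun q => μ H + s * ((∫ t in (0:ℝ)..ℓ q, μ t) - VH)) ν := by
      exact (integrable_const (μ H)).add hi2'
    have hmono := integral_mono hint3 hint1 hpt
    have hIeq : ∫ q, (∫ t in (0:ℝ)..ℓ q, μ t) ∂ν = (ν univ).toReal * VH := by
      rw [hHdef, ← mul_assoc, mul_inv_cancel₀ (ne_of_gt hνR), one_mul]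
    have hEq : ∫ q, (μ H + s * ((∫ t in (0:ℝ)..ℓ q, μ t) - VH)) ∂ν
        = (ν univ).toReal * μ H := by
      rw [integral_add (integrable_const (μ H)) hi2', MeasureTheory.integral_const_mul,
        integral_sub hint2 (integrable_const VH), hIeq, MeasureTheory.integral_const,
        MeasureTheory.integral_const, smul_eq_mul, smul_eq_mul]
      simp only [Measure.real]
      ring
    rw [hEq] at hmono
    exact hmono
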